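/- The map χ_{n,m} is an involution of F_2^n (i.e., χ_{n,m} ∘ χ_{n,m} = id) if and only if n ≤ 2m − 1. -/

import Mathlib

/-!
Write `χ = θ₀ + θ₁` and `W_i(x) = ∏_{0<j<m} (x_{i+j} + 1)`, so that `θ₁(x)_i = x_{i+m} W_i(x)`
and `θ₂(x)_i = θ₁(x)_{i+m} W_i(x)`. A case split on `x_{i+m}` gives
`θ₁(χ x)_i = θ₁(x)_i + θ₂(x)_i`: if `x_{i+m} = 1` then `θ₁(x)` vanishes at `i+1, …, i+m-1`,
and if `x_{i+m} = 0` then `θ₁(x)_{i+m} θ₁(x)_{i+j} = 0` for `0 < j < m`.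
Hence `χ ∘ χ = id + θ₂` over `F_2`, and `χ` is an involution iff `θ₂ = 0`.
For `n < 2m` the leading variable `x_{i+2m}` of `θ₂` is `x_{i+(2m-n)}`, one of its negated
variables because `m ∤ n`, so `θ₂ = 0`; for `n > 2m` the unit vector at `2m` witnesses `θ₂ ≠ 0`.
-/

/-- Index `i + j` computed modulo `n`, for `i : Fin n` and `j : ℕ`. -/
def idx {n : ℕ} (i : Fin n) (j : ℕ) : Fin n :=
  ⟨(i.val + j) % n, Nat.mod_lt _ i.pos⟩

/-- The map `θ_{m,k} : F_2^n → F_2^n`; `θ_{m,0}` is the identity map, and for `k ≥ 1`,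
`(θ_{m,k}(x))_i = x_{i+mk} · ∏_{1 ≤ j ≤ mk−1, m ∤ j} (x_{i+j} + 1)` (indices mod `n`). -/
def theta (n m k : ℕ) : (Fin n → ZMod 2) → Fin n → ZMod 2 :=
  if k = 0 then id
  else fun x i =>
    x (idx i (m * k)) *
      ∏ j ∈ (Finset.Ico 1 (m * k)).filter (fun j => ¬ m ∣ j), (x (idx i j) + 1)

open Finset

lemma mul_prod_eq_mul_prod_of_mul_eq {ι M : Type*} [CommMonoid M] (q : M) (s : Finset ι)
    (f g : ι → M) (h : ∀ j ∈ s, q * f j = q * g j) : q * ∏ j ∈ s, f j = q * ∏ j ∈ s, g j := by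
  classical
  induction s using Finset.induction_on with
  | empty => rfl
  | insert a s ha ih =>
    rw [prod_insert ha, prod_insert ha, mul_left_comm, ih fun j hj => h j (mem_insert_of_mem hj),
      ← mul_assoc, mul_comm (f a), h a (mem_insert_self a s), mul_assoc]

namespace ZMod

lemma mul_prod_add_one_eq_zero {ι : Type*} {s : Finset ι} {t : ι} (f : ι → ZMod 2)
    (ht : t ∈ s) : f t * ∏ j ∈ s, (f j + 1) = 0 := by
  classical
  have hidem : ∀ a : ZMod 2, a * (a + 1) = 0 := by decide
  rw [← mul_prod_erase s _ ht, ← mul_assoc, hidem, zero_mul]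

end ZMod

section Idx

variable {n : ℕ}

lemma idx_idx (i : Fin n) (j l : ℕ) : idx (idx i j) l = idx i (j + l) := by
  ext
  simp only [idx, Nat.mod_add_mod, Nat.add_assoc]

lemma idx_add_self (i : Fin n) (j : ℕ) : idx i (j + n) = idx i j := by
  ext
  simp only [idx, ← Nat.add_assoc, Nat.add_mod_right]

end Idx

section Theta

variable {n m : ℕ}

def window (m : ℕ) (x : Fin n → ZMod 2) (i : Fin n) : ZMod 2 :=
  ∏ j ∈ Ico 1 m, (x (idx i j) + 1)

lemma theta_zero : theta n m 0 = id := rfl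

lemma theta_one_apply (x : Fin n → ZMod 2) (i : Fin n) :
    theta n m 1 x i = x (idx i m) * window m x i := by
  have hfilter : (Ico 1 m).filter (fun j => ¬ m ∣ j) = Ico 1 m :=
    filter_true_of_mem fun j hj hdvd => by
      have := mem_Ico.mp hj
      exact absurd (Nat.le_of_dvd (by omega) hdvd) (by omega)
  simp only [theta, one_ne_zero, if_false, mul_one, hfilter, window]

lemma theta_two_apply (hm : 0 < m) (x : Fin n → ZMod 2) (i : Fin n) :
    theta n m 2 x i = theta n m 1 x (idx i m) * window m x i := by
  have hfilter : (Ico 1 (m * 2)).filter (fun j => ¬ m ∣ j) = Ico 1 m ∪ Ico (1 + m) (m + m) := by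
    ext j
    simp only [mem_filter, mem_Ico, mem_union]
    constructor
    · rintro ⟨hj, hdvd⟩
      have : j ≠ m := by rintro rfl; exact hdvd dvd_rfl
      omega
    · rintro (hj | hj)
      · exact ⟨by omega, fun hdvd => absurd (Nat.le_of_dvd (by omega) hdvd) (by omega)⟩
      · refine ⟨by omega, fun hdvd => ?_⟩
        obtain ⟨c, rfl⟩ := hdvd
        have : 1 < c := (Nat.mul_lt_mul_left hm).mp (by omega)
        have : c < 2 := (Nat.mul_lt_mul_left hm).mp (by omega)
        omega
  have hdisj : Disjoint (Ico 1 m) (Ico (1 + m) (m + m)) :=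
    disjoint_left.mpr fun j h1 h2 => by
      simp only [mem_Ico] at h1 h2
      omega
  rw [theta_one_apply, window, window, idx_idx, theta, if_neg two_ne_zero]
  rw [hfilter, prod_union hdisj, ← prod_Ico_add, mul_two]
  simp only [idx_idx]
  ring

lemma mul_window_eq_zero {j : ℕ} (hj : j ∈ Ico 1 m) (x : Fin n → ZMod 2) (i : Fin n) :
    x (idx i j) * window m x i = 0 :=
  ZMod.mul_prod_add_one_eq_zero (fun l => x (idx i l)) hj

lemma theta_zero_add_theta_one_apply (x : Fin n → ZMod 2) (i : Fin n) :
    (theta n m 0 + theta n m 1) x i = x i + theta n m 1 x i := rfl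

lemma theta_one_theta_zero_add_theta_one_apply (hm : 0 < m) (x : Fin n → ZMod 2) (i : Fin n) :
    theta n m 1 ((theta n m 0 + theta n m 1) x) i = theta n m 1 x i + theta n m 2 x i := by
  simp only [theta_one_apply _ i, window, theta_zero_add_theta_one_apply, theta_two_apply hm]
  rcases (by decide : ∀ a : ZMod 2, a = 0 ∨ a = 1) (x (idx i m)) with h | h
  · rw [h, zero_add, zero_mul, zero_add]
    refine mul_prod_eq_mul_prod_of_mul_eq _ _ _ _ fun j hj => ?_
    have hdisjoint : theta n m 1 x (idx i m) * theta n m 1 x (idx i j) = 0 := by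
      have := mul_window_eq_zero hj x (idx i m)
      rw [idx_idx] at this
      rw [theta_one_apply, theta_one_apply, idx_idx, idx_idx, Nat.add_comm j]
      linear_combination x (idx i (m + m)) * window m x (idx i j) * this
    linear_combination hdisjoint
  · have hvanish : ∀ j ∈ Ico 1 m, theta n m 1 x (idx i j) = 0 := fun j hj => by
      have hj' := mem_Ico.mp hj
      have := mul_window_eq_zero (m := m) (j := m - j) (mem_Ico.mpr ⟨by omega, by omega⟩) x (idx i j)
      rw [idx_idx, Nat.add_sub_cancel' hj'.2.le, h, one_mul] at this
      rw [theta_one_apply, this, mul_zero]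
    rw [prod_congr rfl fun j hj => by rw [hvanish j hj, add_zero], h]
    ring

lemma theta_zero_add_theta_one_comp_self (hm : 0 < m) :
    (theta n m 0 + theta n m 1) ∘ (theta n m 0 + theta n m 1) = theta n m 0 + theta n m 2 := by
  funext x i
  rw [Function.comp_apply, theta_zero_add_theta_one_apply, theta_zero_add_theta_one_apply,
    theta_one_theta_zero_add_theta_one_apply hm, Pi.add_apply, Pi.add_apply, theta_zero, id]
  linear_combination CharTwo.add_self_eq_zero (theta n m 1 x i)

lemma theta_eq_zero_of_lt {k : ℕ} (hk : k ≠ 0) (hlt : n < m * k) (hmn : ¬ m ∣ n) :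
    theta n m k = 0 := by
  funext x i
  have hwrap : m * k - n ∈ (Ico 1 (m * k)).filter (fun j => ¬ m ∣ j) := by
    refine mem_filter.mpr ⟨mem_Ico.mpr ⟨by omega, by have := i.pos; omega⟩, fun hdvd => hmn ?_⟩
    have := Nat.dvd_sub (dvd_mul_right m k) hdvd
    rwa [Nat.sub_sub_self hlt.le] at this
  have hidx : idx i (m * k) = idx i (m * k - n) := by
    rw [← idx_add_self i (m * k - n), Nat.sub_add_cancel hlt.le]
  rw [theta, if_neg hk, hidx]
  exact ZMod.mul_prod_add_one_eq_zero (fun j => x (idx i j)) hwrap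

lemma theta_ne_zero_of_lt {k : ℕ} (hk : k ≠ 0) (hlt : m * k < n) : theta n m k ≠ 0 := by
  intro hzero
  let i₀ : Fin n := ⟨0, by omega⟩
  have hval : ∀ j (hj : j ≤ m * k), idx i₀ j = ⟨j, by omega⟩ := fun j hj =>
    Fin.ext <| by simp only [idx, i₀, Nat.zero_add]; exact Nat.mod_eq_of_lt (by omega)
  have hone : theta n m k (Pi.single ⟨m * k, hlt⟩ 1) i₀ = 1 := by
    rw [theta, if_neg hk, hval _ le_rfl, Pi.single_eq_same, one_mul]
    refine prod_eq_one fun j hj => ?_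
    have hj' := mem_Ico.mp (mem_filter.mp hj).1
    rw [hval j hj'.2.le, Pi.single_eq_of_ne (fun h => by rw [Fin.mk.injEq] at h; omega), zero_add]
  rw [hzero] at hone
  exact zero_ne_one hone

lemma theta_eq_zero_iff {k : ℕ} (hk : k ≠ 0) (hmn : ¬ m ∣ n) : theta n m k = 0 ↔ n < m * k := by
  refine ⟨fun hzero => ?_, fun hlt => theta_eq_zero_of_lt hk hlt hmn⟩
  by_contra hle
  have hne : m * k ≠ n := fun h => hmn (h ▸ dvd_mul_right m k)
  exact theta_ne_zero_of_lt hk (by omega) hzero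

end Theta

theorem stmt18_general (n m : ℕ) (hm : 2 ≤ m) (hmn : ¬ m ∣ n) :
    (theta n m 0 + theta n m 1) ∘ (theta n m 0 + theta n m 1) = id ↔ n ≤ 2 * m - 1 := by
  rw [theta_zero_add_theta_one_comp_self (by omega), theta_zero, add_eq_left,
    theta_eq_zero_iff two_ne_zero hmn]
  omega

theorem stmt18 (n m : ℕ) (hn : 1 ≤ n) (hm : 2 ≤ m) (hmn : ¬ m ∣ n) :
    (theta n m 0 + theta n m 1) ∘ (theta n m 0 + theta n m 1) = id ↔ n ≤ 2 * m - 1 :=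
  stmt18_general n m hm hmn
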